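/- Let m > 1, C > 0, and set α := N/(N(m−1)+2), β := α/N, k := α(m−1)/(2mN). Then the Finsler Barenblatt function 𝒰(x,t) := t^{−α}(C − k H₀(x)² t^{−2β})₊^{1/(m−1)} is a solution of the Finsler porous medium equation ∂_t v = Δ_H(v^m) in ℝ^N × (0,∞) (in the distributional/weak sense, and classically on the open set where C − kH₀(x)²t^{−2β} > 0). -/

import Mathlib

open MeasureTheory Real

noncomputable def dualNorm {N : ℕ} (H : EuclideanSpace ℝ (Fin N) → ℝ)
    (x : EuclideanSpace ℝ (Fin N)) : ℝ :=
  ⨆ ξ : {ξ : EuclideanSpace ℝ (Fin N) // ξ ≠ 0}, (inner ℝ x ξ.1 : ℝ) / H ξ.1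

noncomputable def divg {N : ℕ}
    (F : EuclideanSpace ℝ (Fin N) → EuclideanSpace ℝ (Fin N))
    (x : EuclideanSpace ℝ (Fin N)) : ℝ :=
  ∑ i : Fin N, fderiv ℝ F x (EuclideanSpace.single i 1) i

noncomputable def finslerLap {N : ℕ} (H u : EuclideanSpace ℝ (Fin N) → ℝ)
    (x : EuclideanSpace ℝ (Fin N)) : ℝ :=
  divg (fun y => H (gradient u y) • gradient H (gradient u y)) x

/-!
The Barenblatt profile is a function of `q = H₀²`. If `w` realises `H₀ x = ⟪x, w⟫` with `H w = 1`,
then `w` supports the graph of `H₀` at `x` and `x / H₀ x` supports that of `H` at `w`, so by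
differentiability `∇H₀ x = w` and `∇H w = x / H₀ x`. As `H (a w) ∇H (a w) = a H w ∇H w` for every
real `a`, the Finsler flux of `v = Φ (H₀²)` is `2 Φ' (H₀²) x`, whence
`Δ_H Φ (H₀²) = 2 N Φ' + 4 H₀² Φ''`.
For `Φ p = t^(-α m) (C - k t^(-2β) p)^(m/(m-1))` this equals `∂ₜ𝒰` precisely because
`α m + 2β = α + 1`, `2 N k m/(m-1) = α` and `2 k m/(m-1) = β`.
-/

open Filter Topology InnerProductSpace Metric

section Gradient

variable {E : Type*} [NormedAddCommGroup E] [InnerProductSpace ℝ E] [CompleteSpace E]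

theorem hasGradientAt_of_inner_le {f : E → ℝ} {g x : E} (hle : ∀ y, ⟪y, g⟫_ℝ ≤ f y)
    (heq : ⟪x, g⟫_ℝ = f x) (hf : DifferentiableAt ℝ f x) : HasGradientAt f g x := by
  have hL : HasFDerivAt (fun y => ⟪g, y⟫_ℝ) (toDual ℝ E g) x := (toDual ℝ E g).hasFDerivAt
  have hmin : IsLocalMin (fun y => f y - ⟪g, y⟫_ℝ) x :=
    Eventually.of_forall fun y => by
      linarith [hle y, real_inner_comm g y, real_inner_comm g x]
  rw [hasGradientAt_iff_hasFDerivAt,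
    ← sub_eq_zero.mp (hmin.hasFDerivAt_eq_zero (hf.hasFDerivAt.sub hL))]
  exact hf.hasFDerivAt

theorem HasDerivAt.comp_hasGradientAt {f : E → ℝ} {φ : ℝ → ℝ} {g x : E} {d : ℝ}
    (hφ : HasDerivAt φ d (f x)) (hf : HasGradientAt f g x) :
    HasGradientAt (fun y => φ (f y)) (d • g) x := by
  rw [hasGradientAt_iff_hasFDerivAt, map_smul]
  exact hφ.comp_hasFDerivAt x hf.hasFDerivAt

theorem HasGradientAt.smul_of_abs_homogeneous {H : E → ℝ}
    (hhom : ∀ (a : ℝ) ξ, H (a • ξ) = |a| * H ξ) {g w : E} (hg : HasGradientAt H g w)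
    {a : ℝ} (ha : a ≠ 0) : HasGradientAt H ((|a| / a) • g) (a • w) := by
  have hH : H = fun z => |a| * H (a⁻¹ • z) := by
    funext z
    rw [hhom, abs_inv, ← mul_assoc, mul_inv_cancel₀ (abs_ne_zero.mpr ha), one_mul]
  have hscale : HasFDerivAt (fun z : E => a⁻¹ • z) (a⁻¹ • ContinuousLinearMap.id ℝ E) (a • w) :=
    (hasFDerivAt_id _).const_smul a⁻¹
  rw [← inv_smul_smul₀ ha w] at hg
  have hcomp : HasFDerivAt (fun z => |a| * H (a⁻¹ • z))
      (|a| • ((toDual ℝ E g).comp (a⁻¹ • ContinuousLinearMap.id ℝ E))) (a • w) :=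
    (hg.hasFDerivAt.comp (a • w) hscale).const_mul |a|
  rw [← hH] at hcomp
  have hD : |a| • ((toDual ℝ E g).comp (a⁻¹ • ContinuousLinearMap.id ℝ E))
      = toDual ℝ E ((|a| / a) • g) := by
    ext v
    simp only [ContinuousLinearMap.comp_smulₛₗ, map_inv₀, ringHom_apply,
      ContinuousLinearMap.comp_id, smul_apply, toDual_apply_apply, smul_eq_mul, div_eq_mul_inv,
      map_smul]
    ring
  rwa [hasGradientAt_iff_hasFDerivAt, ← hD]

theorem apply_smul_smul_gradient_of_abs_homogeneous {H : E → ℝ}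
    (hhom : ∀ (a : ℝ) ξ, H (a • ξ) = |a| * H ξ) {g w : E} (hg : HasGradientAt H g w) (a : ℝ) :
    H (a • w) • gradient H (a • w) = (a * H w) • g := by
  rcases eq_or_ne a 0 with rfl | ha
  · have h0 : H 0 = 0 := by simpa using hhom 0 0
    simp [h0]
  rw [(hg.smul_of_abs_homogeneous hhom ha).gradient, hhom, smul_smul]
  congr 1
  field_simp
  rw [sq_abs]
  ring

end Gradient

noncomputable def finslerFlux {N : ℕ} (H u : EuclideanSpace ℝ (Fin N) → ℝ)
    (y : EuclideanSpace ℝ (Fin N)) : EuclideanSpace ℝ (Fin N) :=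
  H (gradient u y) • gradient H (gradient u y)

theorem divg_congr {N : ℕ} {F G : EuclideanSpace ℝ (Fin N) → EuclideanSpace ℝ (Fin N)}
    {x : EuclideanSpace ℝ (Fin N)} (h : F =ᶠ[𝓝 x] G) : divg F x = divg G x := by
  simp only [divg, h.fderiv_eq]

theorem divg_smul_self {N : ℕ} {σ : EuclideanSpace ℝ (Fin N) → ℝ} {g x : EuclideanSpace ℝ (Fin N)}
    (hσ : HasGradientAt σ g x) : divg (fun y => σ y • y) x = N * σ x + ⟪g, x⟫_ℝ := by
  have hF : HasFDerivAt (fun y => σ y • y) (σ x • ContinuousLinearMap.id ℝ _ +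
      (toDual ℝ (EuclideanSpace ℝ (Fin N)) g).smulRight x) x :=
    hσ.hasFDerivAt.smul (hasFDerivAt_id x)
  rw [divg, hF.fderiv]
  simp [Finset.sum_add_distrib, PiLp.inner_apply, mul_comm]

structure IsDifferentiableGauge {N : ℕ} (H : EuclideanSpace ℝ (Fin N) → ℝ) : Prop where
  nonneg : ∀ ξ, 0 ≤ H ξ
  eq_zero_iff : ∀ ξ, H ξ = 0 ↔ ξ = 0
  abs_homogeneous : ∀ (a : ℝ) ξ, H (a • ξ) = |a| * H ξ
  differentiableOn : DifferentiableOn ℝ H {ξ | ξ ≠ 0}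

theorem dualNorm_zero {N : ℕ} (H : EuclideanSpace ℝ (Fin N) → ℝ) : dualNorm H 0 = 0 := by
  simp [dualNorm]

namespace IsDifferentiableGauge

variable {N : ℕ} {H : EuclideanSpace ℝ (Fin N) → ℝ}

theorem pos (hH : IsDifferentiableGauge H) {ξ : EuclideanSpace ℝ (Fin N)} (hξ : ξ ≠ 0) : 0 < H ξ :=
  (hH.nonneg ξ).lt_of_ne' (hξ ∘ (hH.eq_zero_iff ξ).mp)

theorem differentiableAt (hH : IsDifferentiableGauge H) {ξ : EuclideanSpace ℝ (Fin N)} (hξ : ξ ≠ 0) :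
    DifferentiableAt ℝ H ξ :=
  hH.differentiableOn.differentiableAt (isOpen_ne.mem_nhds hξ)

theorem eq_norm_mul_apply_normalize (hH : IsDifferentiableGauge H) (ξ : EuclideanSpace ℝ (Fin N)) :
    H ξ = ‖ξ‖ * H (‖ξ‖⁻¹ • ξ) := by
  rcases eq_or_ne ξ 0 with rfl | hξ
  · simp [hH.eq_zero_iff]
  rw [hH.abs_homogeneous, abs_inv, abs_norm, mul_inv_cancel_left₀ (norm_ne_zero_iff.mpr hξ)]

theorem exists_pos_mul_norm_le (hH : IsDifferentiableGauge H) : ∃ c > 0, ∀ ξ, c * ‖ξ‖ ≤ H ξ := by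
  have hsphere : ∀ ξ : EuclideanSpace ℝ (Fin N), ξ ≠ 0 → ‖ξ‖⁻¹ • ξ ∈ sphere 0 1 := fun ξ hξ => by
    simp [norm_smul, inv_mul_cancel₀ (norm_ne_zero_iff.mpr hξ)]
  rcases (sphere (0 : EuclideanSpace ℝ (Fin N)) 1).eq_empty_or_nonempty with hempty | hne
  · refine ⟨1, one_pos, fun ξ => ?_⟩
    obtain rfl : ξ = 0 := by
      by_contra hξ
      simpa [hempty] using hsphere ξ hξ
    simp [hH.nonneg]
  have hcont : ContinuousOn H (sphere 0 1) :=
    hH.differentiableOn.continuousOn.mono fun ξ hξ => ne_zero_of_mem_unit_sphere ⟨ξ, hξ⟩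
  obtain ⟨ξ₀, hξ₀, hmin⟩ := (isCompact_sphere 0 1).exists_isMinOn hne hcont
  refine ⟨H ξ₀, hH.pos (ne_zero_of_mem_unit_sphere ⟨ξ₀, hξ₀⟩), fun ξ => ?_⟩
  rcases eq_or_ne ξ 0 with rfl | hξ
  · simp [hH.nonneg]
  rw [hH.eq_norm_mul_apply_normalize ξ, mul_comm]
  exact mul_le_mul_of_nonneg_left (hmin (hsphere ξ hξ)) (norm_nonneg ξ)

theorem exists_inner_div_le (hH : IsDifferentiableGauge H) :
    ∃ C, 0 ≤ C ∧ ∀ x ξ : EuclideanSpace ℝ (Fin N), ξ ≠ 0 → ⟪x, ξ⟫_ℝ / H ξ ≤ C * ‖x‖ := by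
  obtain ⟨c, hc, hlb⟩ := hH.exists_pos_mul_norm_le
  refine ⟨c⁻¹, inv_nonneg.mpr hc.le, fun x ξ hξ => ?_⟩
  rw [div_le_iff₀ (hH.pos hξ)]
  calc ⟪x, ξ⟫_ℝ ≤ ‖x‖ * ‖ξ‖ := real_inner_le_norm x ξ
    _ = c⁻¹ * ‖x‖ * (c * ‖ξ‖) := by field_simp
    _ ≤ c⁻¹ * ‖x‖ * H ξ := by gcongr; exact hlb ξ

theorem inner_div_le_dualNorm (hH : IsDifferentiableGauge H) (x : EuclideanSpace ℝ (Fin N))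
    {ξ : EuclideanSpace ℝ (Fin N)} (hξ : ξ ≠ 0) : ⟪x, ξ⟫_ℝ / H ξ ≤ dualNorm H x := by
  obtain ⟨C, -, hC⟩ := hH.exists_inner_div_le
  exact le_ciSup ⟨C * ‖x‖, by rintro _ ⟨η, rfl⟩; exact hC x η.1 η.2⟩
    (⟨ξ, hξ⟩ : {ξ : EuclideanSpace ℝ (Fin N) // ξ ≠ 0})

theorem exists_dualNorm_le (hH : IsDifferentiableGauge H) :
    ∃ C, ∀ x : EuclideanSpace ℝ (Fin N), dualNorm H x ≤ C * ‖x‖ := by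
  obtain ⟨C, hC0, hC⟩ := hH.exists_inner_div_le
  exact ⟨C, fun x => Real.iSup_le (fun η => hC x η η.2) (by positivity)⟩

theorem inner_le_dualNorm_mul (hH : IsDifferentiableGauge H) (x η : EuclideanSpace ℝ (Fin N)) :
    ⟪x, η⟫_ℝ ≤ dualNorm H x * H η := by
  rcases eq_or_ne η 0 with rfl | hη
  · simp [(hH.eq_zero_iff 0).mpr rfl]
  rw [← div_le_iff₀ (hH.pos hη)]
  exact hH.inner_div_le_dualNorm x hη

theorem dualNorm_pos (hH : IsDifferentiableGauge H) {x : EuclideanSpace ℝ (Fin N)} (hx : x ≠ 0) :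
    0 < dualNorm H x := by
  have hxx : 0 < ⟪x, x⟫_ℝ / H x := by
    rw [real_inner_self_eq_norm_sq]
    exact div_pos (by positivity) (hH.pos hx)
  exact hxx.trans_le (hH.inner_div_le_dualNorm x hx)

theorem dualNorm_nonneg (hH : IsDifferentiableGauge H) (x : EuclideanSpace ℝ (Fin N)) : 0 ≤ dualNorm H x := by
  rcases eq_or_ne x 0 with rfl | hx
  · rw [dualNorm_zero]
  · exact (hH.dualNorm_pos hx).le

theorem exists_inner_eq_dualNorm (hH : IsDifferentiableGauge H) {x : EuclideanSpace ℝ (Fin N)} (hx : x ≠ 0) :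
    ∃ w, H w = 1 ∧ ⟪x, w⟫_ℝ = dualNorm H x := by
  set f : EuclideanSpace ℝ (Fin N) → ℝ := fun η => ⟪x, η⟫_ℝ / H η
  have hsphere : ∀ η : EuclideanSpace ℝ (Fin N), η ≠ 0 → ‖η‖⁻¹ • η ∈ sphere 0 1 := fun η hη => by
    simp [norm_smul, inv_mul_cancel₀ (norm_ne_zero_iff.mpr hη)]
  have hnormalize : ∀ η, f (‖η‖⁻¹ • η) = f η := fun η => by
    simp only [f, real_inner_smul_right, hH.abs_homogeneous, abs_inv, abs_norm]
    rcases eq_or_ne η 0 with rfl | hη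
    · simp
    · exact mul_div_mul_left _ _ (inv_ne_zero (norm_ne_zero_iff.mpr hη))
  have hcont : ContinuousOn f (sphere 0 1) :=
    (continuous_const.inner continuous_id).continuousOn.div
      (hH.differentiableOn.continuousOn.mono fun η hη => ne_zero_of_mem_unit_sphere ⟨η, hη⟩)
      fun η hη => (hH.pos (ne_zero_of_mem_unit_sphere ⟨η, hη⟩)).ne'
  obtain ⟨ξ, hξ, hmax⟩ := (isCompact_sphere 0 1).exists_isMaxOn ⟨_, hsphere x hx⟩ hcont
  have hξ0 : ξ ≠ 0 := ne_zero_of_mem_unit_sphere ⟨ξ, hξ⟩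
  have hdual : dualNorm H x = f ξ := by
    have : Nonempty {η : EuclideanSpace ℝ (Fin N) // η ≠ 0} := ⟨⟨x, hx⟩⟩
    refine le_antisymm (ciSup_le fun η => ?_) (hH.inner_div_le_dualNorm x hξ0)
    exact (hnormalize η.1).ge.trans (hmax (hsphere η.1 η.2))
  refine ⟨(H ξ)⁻¹ • ξ, ?_, ?_⟩
  · rw [hH.abs_homogeneous, abs_inv, abs_of_pos (hH.pos hξ0), inv_mul_cancel₀ (hH.pos hξ0).ne']
  · rw [real_inner_smul_right, hdual, inv_mul_eq_div]

theorem exists_hasGradientAt_dualNorm_sq (hH : IsDifferentiableGauge H)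
    (hH₀ : DifferentiableOn ℝ (dualNorm H) {x | x ≠ 0}) {x : EuclideanSpace ℝ (Fin N)} (hx : x ≠ 0) :
    ∃ w, H w = 1 ∧ ⟪x, w⟫_ℝ = dualNorm H x ∧
      HasGradientAt (fun y => dualNorm H y ^ 2) ((2 * dualNorm H x) • w) x ∧
      HasGradientAt H ((dualNorm H x)⁻¹ • x) w := by
  obtain ⟨w, hw, hxw⟩ := hH.exists_inner_eq_dualNorm hx
  have hw0 : w ≠ 0 := by rintro rfl; simp [(hH.eq_zero_iff 0).mpr rfl] at hw
  have hpos := hH.dualNorm_pos hx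
  have hgrad : HasGradientAt (dualNorm H) w x :=
    hasGradientAt_of_inner_le (fun y => by simpa [hw] using hH.inner_le_dualNorm_mul y w) hxw
      (hH₀.differentiableAt (isOpen_ne.mem_nhds hx))
  refine ⟨w, hw, hxw, ?_, hasGradientAt_of_inner_le (fun η => ?_) ?_ (hH.differentiableAt hw0)⟩
  · simpa using (hasDerivAt_pow 2 (dualNorm H x)).comp_hasGradientAt hgrad
  · rw [real_inner_smul_right, real_inner_comm, inv_mul_le_iff₀ hpos]
    exact hH.inner_le_dualNorm_mul x η
  · rw [real_inner_smul_right, real_inner_comm, hxw, inv_mul_cancel₀ hpos.ne', hw]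

theorem hasGradientAt_dualNorm_sq_zero (hH : IsDifferentiableGauge H) :
    HasGradientAt (fun y => dualNorm H y ^ 2) 0 (0 : EuclideanSpace ℝ (Fin N)) := by
  obtain ⟨C, hC⟩ := hH.exists_dualNorm_le
  rw [hasGradientAt_iff_isLittleO_nhds_zero]
  simp only [zero_add, dualNorm_zero, inner_zero_left]
  refine (Asymptotics.IsBigO.of_bound (C ^ 2) (Eventually.of_forall fun y => ?_)).trans_isLittleO
    (Asymptotics.isLittleO_norm_pow_id one_lt_two)
  rw [norm_pow, norm_norm, ← mul_pow, Real.norm_eq_abs]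
  simpa using pow_le_pow_left₀ (hH.dualNorm_nonneg y) (hC y) 2

theorem differentiable_dualNorm_sq (hH : IsDifferentiableGauge H)
    (hH₀ : DifferentiableOn ℝ (dualNorm H) {x | x ≠ 0}) :
    Differentiable ℝ fun y : EuclideanSpace ℝ (Fin N) => dualNorm H y ^ 2 := fun y => by
  rcases eq_or_ne y 0 with rfl | hy
  · exact hH.hasGradientAt_dualNorm_sq_zero.differentiableAt
  · obtain ⟨_, -, -, hgrad, -⟩ := hH.exists_hasGradientAt_dualNorm_sq hH₀ hy
    exact hgrad.differentiableAt

theorem inner_gradient_dualNorm_sq_self (hH : IsDifferentiableGauge H)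
    (hH₀ : DifferentiableOn ℝ (dualNorm H) {x | x ≠ 0}) (y : EuclideanSpace ℝ (Fin N)) :
    ⟪gradient (fun y => dualNorm H y ^ 2) y, y⟫_ℝ = 2 * dualNorm H y ^ 2 := by
  rcases eq_or_ne y 0 with rfl | hy
  · simp [dualNorm_zero]
  · obtain ⟨w, -, hyw, hgrad, -⟩ := hH.exists_hasGradientAt_dualNorm_sq hH₀ hy
    rw [hgrad.gradient, real_inner_smul_left, real_inner_comm, hyw]
    ring

theorem finslerFlux_comp_dualNorm_sq (hH : IsDifferentiableGauge H)
    (hH₀ : DifferentiableOn ℝ (dualNorm H) {x | x ≠ 0}) {v : EuclideanSpace ℝ (Fin N) → ℝ}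
    {Φ : ℝ → ℝ} {φ : ℝ} {y : EuclideanSpace ℝ (Fin N)}
    (hv : v =ᶠ[𝓝 y] fun z => Φ (dualNorm H z ^ 2)) (hΦ : HasDerivAt Φ φ (dualNorm H y ^ 2)) :
    finslerFlux H v y = (2 * φ) • y := by
  have hgrad : gradient v y = φ • gradient (fun z => dualNorm H z ^ 2) y :=
    ((hΦ.comp_hasGradientAt (f := fun z => dualNorm H z ^ 2)
      (hH.differentiable_dualNorm_sq hH₀ y).hasGradientAt).congr_of_eventuallyEq hv).gradient
  rw [finslerFlux]
  rcases eq_or_ne y 0 with rfl | hy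
  · simp [hgrad, hH.hasGradientAt_dualNorm_sq_zero.gradient, (hH.eq_zero_iff 0).mpr rfl]
  obtain ⟨w, hw, -, hgrad_sq, hgrad_H⟩ := hH.exists_hasGradientAt_dualNorm_sq hH₀ hy
  rw [hgrad, hgrad_sq.gradient, smul_smul,
    apply_smul_smul_gradient_of_abs_homogeneous hH.abs_homogeneous hgrad_H, hw, smul_smul]
  field_simp [(hH.dualNorm_pos hy).ne']

theorem finslerLap_comp_dualNorm_sq (hH : IsDifferentiableGauge H)
    (hH₀ : DifferentiableOn ℝ (dualNorm H) {x | x ≠ 0})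
    {u : EuclideanSpace ℝ (Fin N) → ℝ} {Φ Φ' : ℝ → ℝ} {Φ'' : ℝ} {x : EuclideanSpace ℝ (Fin N)}
    (hu : u =ᶠ[𝓝 x] fun y => Φ (dualNorm H y ^ 2))
    (hΦ : ∀ᶠ p in 𝓝 (dualNorm H x ^ 2), HasDerivAt Φ (Φ' p) p)
    (hΦ' : HasDerivAt Φ' Φ'' (dualNorm H x ^ 2)) :
    finslerLap H u x = 2 * N * Φ' (dualNorm H x ^ 2) + 4 * Φ'' * dualNorm H x ^ 2 := by
  have hq := hH.differentiable_dualNorm_sq hH₀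
  have hflux : finslerFlux H u =ᶠ[𝓝 x] fun y => (2 * Φ' (dualNorm H y ^ 2)) • y := by
    filter_upwards [hu.eventuallyEq_nhds, (hq x).continuousAt.eventually hΦ] with y hy hΦy
    exact hH.finslerFlux_comp_dualNorm_sq hH₀ hy hΦy
  have hσ : HasGradientAt (fun y => 2 * Φ' (dualNorm H y ^ 2))
      ((2 * Φ'') • gradient (fun y => dualNorm H y ^ 2) x) x :=
    (hΦ'.const_mul 2).comp_hasGradientAt (f := fun y => dualNorm H y ^ 2) (hq x).hasGradientAt
  rw [show finslerLap H u x = divg (finslerFlux H u) x from rfl, divg_congr hflux,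
    divg_smul_self hσ, real_inner_smul_left, hH.inner_gradient_dualNorm_sq_self hH₀]
  ring

end IsDifferentiableGauge

theorem hasDerivAt_sub_mul_rpow {b c e p : ℝ} (hp : 0 < b - c * p) :
    HasDerivAt (fun p => (b - c * p) ^ e) (-(e * c) * (b - c * p) ^ (e - 1)) p := by
  have h := (Real.hasDerivAt_rpow_const (p := e) (Or.inl hp.ne')).comp p
    (((hasDerivAt_id p).const_mul c).const_sub b)
  exact h.congr_deriv (by simp only [mul_one, mul_neg, neg_mul, neg_inj]; ring)

noncomputable def finslerBarenblatt {N : ℕ} (H : EuclideanSpace ℝ (Fin N) → ℝ) (m C α β k : ℝ)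
    (x : EuclideanSpace ℝ (Fin N)) (t : ℝ) : ℝ :=
  t ^ (-α) * (max (C - k * (dualNorm H x) ^ 2 * t ^ (-2 * β)) 0) ^ (1 / (m - 1))

theorem hasDerivAt_finslerBarenblatt {N : ℕ} (H : EuclideanSpace ℝ (Fin N) → ℝ)
    (m C α β k : ℝ) {x : EuclideanSpace ℝ (Fin N)} {t : ℝ} (ht : 0 < t)
    (hpos : 0 < C - k * dualNorm H x ^ 2 * t ^ (-2 * β)) :
    HasDerivAt (finslerBarenblatt H m C α β k x)
      (-α * t ^ (-α - 1) * (C - k * dualNorm H x ^ 2 * t ^ (-2 * β)) ^ (1 / (m - 1))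
        + 2 * β * (1 / (m - 1)) * k * dualNorm H x ^ 2 * t ^ (-α) * t ^ (-2 * β - 1)
          * (C - k * dualNorm H x ^ 2 * t ^ (-2 * β)) ^ (1 / (m - 1) - 1)) t := by
  have hcont : ContinuousAt (fun s => C - k * dualNorm H x ^ 2 * s ^ (-2 * β)) t :=
    continuousAt_const.sub (continuousAt_const.mul (continuousAt_id.rpow_const (Or.inl ht.ne')))
  have hev : finslerBarenblatt H m C α β k x =ᶠ[𝓝 t]
      fun s => s ^ (-α) * (C - k * dualNorm H x ^ 2 * s ^ (-2 * β)) ^ (1 / (m - 1)) := by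
    filter_upwards [hcont.eventually (lt_mem_nhds hpos)] with s hs
    rw [finslerBarenblatt, max_eq_left hs.le]
  have h := (Real.hasDerivAt_rpow_const (p := -α) (Or.inl ht.ne')).mul
    ((hasDerivAt_sub_mul_rpow (e := 1 / (m - 1)) hpos).comp t
      (Real.hasDerivAt_rpow_const (p := -2 * β) (Or.inl ht.ne')))
  exact (h.congr_of_eventuallyEq hev).congr_deriv (by simp only [Function.comp_apply]; ring)

theorem IsDifferentiableGauge.finslerLap_finslerBarenblatt_pow {N : ℕ} {H : EuclideanSpace ℝ (Fin N) → ℝ}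
    (hH : IsDifferentiableGauge H) (hH₀ : DifferentiableOn ℝ (dualNorm H) {x | x ≠ 0}) (m C α β k : ℝ)
    {x : EuclideanSpace ℝ (Fin N)} {t : ℝ} (ht : 0 < t)
    (hpos : 0 < C - k * dualNorm H x ^ 2 * t ^ (-2 * β)) :
    finslerLap H (fun y => finslerBarenblatt H m C α β k y t ^ m) x =
      2 * N * (-(t ^ (-α * m) * (1 / (m - 1) * m) * (k * t ^ (-2 * β)))
          * (C - k * dualNorm H x ^ 2 * t ^ (-2 * β)) ^ (1 / (m - 1) * m - 1))
        + 4 * (t ^ (-α * m) * (1 / (m - 1) * m) * (k * t ^ (-2 * β)) * (1 / (m - 1) * m - 1)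
          * (k * t ^ (-2 * β)))
          * (C - k * dualNorm H x ^ 2 * t ^ (-2 * β)) ^ (1 / (m - 1) * m - 1 - 1)
          * dualNorm H x ^ 2 := by
  set K := k * t ^ (-2 * β)
  set e := 1 / (m - 1) * m
  have hA : ∀ y, C - k * dualNorm H y ^ 2 * t ^ (-2 * β) = C - K * dualNorm H y ^ 2 := fun y => by
    ring
  have hposK : 0 < C - K * dualNorm H x ^ 2 := hA x ▸ hpos
  have hu : (fun y => finslerBarenblatt H m C α β k y t ^ m) =ᶠ[𝓝 x]
      fun y => t ^ (-α * m) * (C - K * dualNorm H y ^ 2) ^ e := by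
    have hcont : Continuous fun y => C - K * dualNorm H y ^ 2 :=
      continuous_const.sub (continuous_const.mul (hH.differentiable_dualNorm_sq hH₀).continuous)
    filter_upwards [hcont.continuousAt.eventually (lt_mem_nhds hposK)] with y hy
    rw [finslerBarenblatt, hA, max_eq_left hy.le,
      mul_rpow (rpow_nonneg ht.le _) (rpow_nonneg hy.le _), ← rpow_mul ht.le, ← rpow_mul hy.le]
  have hΦ : ∀ᶠ p in 𝓝 (dualNorm H x ^ 2), HasDerivAt (fun p => t ^ (-α * m) * (C - K * p) ^ e)
      (-(t ^ (-α * m) * e * K) * (C - K * p) ^ (e - 1)) p := by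
    have hcont : Continuous fun p : ℝ => C - K * p :=
      continuous_const.sub (continuous_const.mul continuous_id)
    filter_upwards [hcont.continuousAt.eventually (lt_mem_nhds hposK)] with p hp
    exact ((hasDerivAt_sub_mul_rpow hp).const_mul _).congr_deriv (by ring)
  have hΦ' := (hasDerivAt_sub_mul_rpow (e := e - 1) hposK).const_mul (-(t ^ (-α * m) * e * K))
  rw [hH.finslerLap_comp_dualNorm_sq hH₀ hu hΦ hΦ', hA]
  ring

theorem finslerBarenblatt_balance {N : ℕ} {m α β k t A q : ℝ} (hm : 1 < m) (ht : 0 < t)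
    (hα : α = N / (N * (m - 1) + 2)) (hβ : β = α / N) (hk : k = α * (m - 1) / (2 * m * N)) :
    -α * t ^ (-α - 1) * A ^ (1 / (m - 1))
        + 2 * β * (1 / (m - 1)) * k * q * t ^ (-α) * t ^ (-2 * β - 1) * A ^ (1 / (m - 1) - 1) =
      2 * N * (-(t ^ (-α * m) * (1 / (m - 1) * m) * (k * t ^ (-2 * β))) * A ^ (1 / (m - 1) * m - 1))
        + 4 * (t ^ (-α * m) * (1 / (m - 1) * m) * (k * t ^ (-2 * β)) * (1 / (m - 1) * m - 1)
          * (k * t ^ (-2 * β))) * A ^ (1 / (m - 1) * m - 1 - 1) * q := by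
  have hm1 : m - 1 ≠ 0 := sub_ne_zero.mpr hm.ne'
  have he : 1 / (m - 1) * m - 1 = 1 / (m - 1) := by field_simp; ring
  rw [he]
  rcases N.eq_zero_or_pos with rfl | hN
  -- `β = α / 0 = 0`, and `α = k = 0`: both sides vanish.
  · simp [hα, hk]
  have hN' : (0 : ℝ) < N := Nat.cast_pos.mpr hN
  have hden : (N : ℝ) * (m - 1) + 2 ≠ 0 := by nlinarith
  have hcoef₁ : 2 * N * (1 / (m - 1) * m) * k = α := by
    rw [hk]; field_simp
  have hcoef₂ : 2 * (1 / (m - 1) * m) * k = β := by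
    rw [hk, hβ]; field_simp
  have hexp : -α * m - 2 * β = -α - 1 := by
    rw [hβ, hα]; field_simp; ring
  have hpow₁ : t ^ (-α * m) * t ^ (-2 * β) = t ^ (-α - 1) := by
    rw [← rpow_add ht, ← hexp]; ring_nf
  have hpow₂ : t ^ (-α * m) * t ^ (-2 * β) * t ^ (-2 * β) = t ^ (-α) * t ^ (-2 * β - 1) := by
    rw [← rpow_add ht, ← rpow_add ht, ← rpow_add ht]; congr 1; linarith
  linear_combination (A ^ (1 / (m - 1)) * t ^ (-α - 1)) * hcoef₁
    + (A ^ (1 / (m - 1)) * 2 * N * (1 / (m - 1) * m) * k) * hpow₁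
    - (2 * (1 / (m - 1)) * k * q * A ^ (1 / (m - 1) - 1) * t ^ (-α) * t ^ (-2 * β - 1)) * hcoef₂
    - (2 * (1 / (m - 1)) * k * q * A ^ (1 / (m - 1) - 1) * 2 * (1 / (m - 1) * m) * k) * hpow₂

theorem stmt_13_general {N : ℕ} (H : EuclideanSpace ℝ (Fin N) → ℝ)
    (hH0 : ∀ ξ, 0 ≤ H ξ) (hHz : ∀ ξ, H ξ = 0 ↔ ξ = 0)
    (hhom : ∀ (a : ℝ) ξ, H (a • ξ) = |a| * H ξ)
    (hC1 : ContDiffOn ℝ 1 H {ξ | ξ ≠ 0})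
    (hC1dual : ContDiffOn ℝ 1 (dualNorm H) {x | x ≠ 0})
    (m C : ℝ) (hm : 1 < m)
    (α β k : ℝ)
    (hα : α = N / (N * (m - 1) + 2)) (hβ : β = α / N)
    (hk : k = α * (m - 1) / (2 * m * N))
    (U : EuclideanSpace ℝ (Fin N) → ℝ → ℝ)
    (hU : ∀ x t, U x t
      = t ^ (-α) * (max (C - k * (dualNorm H x) ^ 2 * t ^ (-2 * β)) 0) ^ (1 / (m - 1))) :
    ∀ (x : EuclideanSpace ℝ (Fin N)) (t : ℝ), 0 < t →
      0 < C - k * (dualNorm H x) ^ 2 * t ^ (-2 * β) →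
      deriv (fun s => U x s) t = finslerLap H (fun y => (U y t) ^ m) x := by
  intro x t ht hpos
  have hH : IsDifferentiableGauge H := ⟨hH0, hHz, hhom, hC1.differentiableOn one_ne_zero⟩
  obtain rfl : U = finslerBarenblatt H m C α β k := funext fun x => funext (hU x)
  rw [(hasDerivAt_finslerBarenblatt H m C α β k ht hpos).deriv,
    hH.finslerLap_finslerBarenblatt_pow (hC1dual.differentiableOn one_ne_zero) m C α β k ht hpos]
  exact finslerBarenblatt_balance hm ht hα hβ hk

theorem stmt_13 {N : ℕ} (H : EuclideanSpace ℝ (Fin N) → ℝ)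
    (hH0 : ∀ ξ, 0 ≤ H ξ) (hHz : ∀ ξ, H ξ = 0 ↔ ξ = 0)
    (hconv : ConvexOn ℝ Set.univ H)
    (hhom : ∀ (a : ℝ) ξ, H (a • ξ) = |a| * H ξ)
    (hC1 : ContDiffOn ℝ 1 H {ξ | ξ ≠ 0})
    (hC1dual : ContDiffOn ℝ 1 (dualNorm H) {x | x ≠ 0})
    (m C : ℝ) (hm : 1 < m) (hC : 0 < C)
    (α β k : ℝ)
    (hα : α = N / (N * (m - 1) + 2)) (hβ : β = α / N)
    (hk : k = α * (m - 1) / (2 * m * N))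
    (U : EuclideanSpace ℝ (Fin N) → ℝ → ℝ)
    (hU : ∀ x t, U x t
      = t ^ (-α) * (max (C - k * (dualNorm H x) ^ 2 * t ^ (-2 * β)) 0) ^ (1 / (m - 1))) :
    ∀ (x : EuclideanSpace ℝ (Fin N)) (t : ℝ), 0 < t →
      0 < C - k * (dualNorm H x) ^ 2 * t ^ (-2 * β) →
      deriv (fun s => U x s) t = finslerLap H (fun y => (U y t) ^ m) x :=
  stmt_13_general H hH0 hHz hhom hC1 hC1dual m C hm α β k hα hβ hk U hU
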